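/- For all functions b, β that are finite linear combinations of Haar functions, all J ∈ 𝒟, and σ independent uniform ±1 random signs, E ‖M_b T_σ M_β h¹_J‖_2² ≥ |J|^{−1} Σ_{I∈𝒟, I⊆J} (⟨β,h_I⟩²/|I|) ∫_I b² dx; consequently the averaged operator norm ‖M_b T_σ M_β‖_{E,2→2}² dominates sup_{J∈𝒟} |J|^{−1} Σ_{I⊆J} (⟨β,h_I⟩²/|I|) ∫_I b² dx. -/

import Mathlib

open MeasureTheory ProbabilityTheory Real Filter
open scoped ENNReal

attribute [local instance] Classical.propDecidable

noncomputable section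

namespace RandomParaproducts

/-- Dyadic intervals: `(n, k)` represents `[k·2ⁿ, (k+1)·2ⁿ)`. -/
abbrev D : Type := ℤ × ℤ

/-- The length `2ⁿ` of the dyadic interval `(n, k)`. -/
def len (I : D) : ℝ := (2 : ℝ) ^ I.1

/-- The dyadic interval `[k·2ⁿ, (k+1)·2ⁿ)` as a subset of `ℝ`. -/
def ival (I : D) : Set ℝ := Set.Ico ((I.2 : ℝ) * (2 : ℝ) ^ I.1) (((I.2 : ℝ) + 1) * (2 : ℝ) ^ I.1)

/-- The left half of a dyadic interval. -/
def lc (I : D) : D := (I.1 - 1, 2 * I.2)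

/-- The right half of a dyadic interval. -/
def rc (I : D) : D := (I.1 - 1, 2 * I.2 + 1)

/-- The `L²`-normalized Haar function `h_I = h⁰_I`. -/
def haar (I : D) : ℝ → ℝ := fun x =>
  (Real.sqrt (len I))⁻¹ *
    ((ival (rc I)).indicator (fun _ => (1 : ℝ)) x - (ival (lc I)).indicator (fun _ => (1 : ℝ)) x)

/-- The function `h¹_I = |h_I| = |I|^{-1/2} 1_I`. -/
def haar1 (I : D) : ℝ → ℝ := fun x =>
  (Real.sqrt (len I))⁻¹ * (ival I).indicator (fun _ => (1 : ℝ)) x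

/-- `h^ε_I`, where `false` codes the exponent `0` and `true` codes the exponent `1`. -/
def hfun : Bool → D → ℝ → ℝ
  | false => haar
  | true => haar1

/-- The inner product `⟨f, g⟩ = ∫ f g` on `L²(ℝ)`. -/
def ip (f g : ℝ → ℝ) : ℝ := ∫ x, f x * g x

/-- The paraproduct `P^{ε,δ}_b f = ∑_I b_I ⟨f, h^δ_I⟩ h^ε_I` with finitely supported
numerical symbol `b`. -/
def P (e d : Bool) (b : D →₀ ℝ) (f : ℝ → ℝ) : ℝ → ℝ := fun x =>
  ∑ I ∈ b.support, b I * ip f (hfun d I) * hfun e I x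

/-- The signed paraproduct `P^{σ,ε,δ}_b f = ∑_I σ_I b_I ⟨f, h^δ_I⟩ h^ε_I`. -/
def Psig (σ : D → ℝ) (e d : Bool) (b : D →₀ ℝ) (f : ℝ → ℝ) : ℝ → ℝ := fun x =>
  ∑ I ∈ b.support, σ I * (b I * ip f (hfun d I) * hfun e I x)

/-- The square of the `L²(ℝ)` norm, `‖g‖₂² = ∫ g²`. -/
def l2normSq (g : ℝ → ℝ) : ℝ := ∫ x, (g x) ^ 2

/-- The Carleson norm of a sequence `a` whose nonzero entries lie in the finite set `s`:
`sup_J (|J|⁻¹ ∑_{I ⊆ J} a_I² |I|)^{1/2}`. -/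
def carlOn (s : Finset D) (a : D → ℝ) : ℝ :=
  ⨆ J : D, Real.sqrt ((len J)⁻¹ *
    ∑ I ∈ s.filter (fun I => ival I ⊆ ival J), (a I) ^ 2 * len I)

/-- `μ` is the law of independent uniformly distributed random signs `{σ_I : I ∈ 𝒟}`. -/
def IsSignMeasure (μ : Measure (D → ℝ)) : Prop :=
  IsProbabilityMeasure μ ∧
    iIndepFun (fun I σ => σ I) μ ∧
    ∀ I : D, μ.map (fun σ => σ I) =
      (2⁻¹ : ℝ≥0∞) • (Measure.dirac (1 : ℝ) + Measure.dirac (-1 : ℝ))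

/-- `f` is a unit vector of `L²(ℝ)`. -/
def UnitL2 (f : ℝ → ℝ) : Prop := MemLp f 2 volume ∧ eLpNorm f 2 volume = 1

/-- The operator norm on `L²(ℝ)` of a map defined on functions. -/
def opNorm (T : (ℝ → ℝ) → ℝ → ℝ) : ℝ :=
  ⨆ f : {f : ℝ → ℝ // UnitL2 f}, Real.sqrt (l2normSq (T f.1))

/-- The averaged operator norm `sup_{‖f‖₂ = 1} (𝔼 ‖T_σ f‖₂²)^{1/2}`. -/
def avgOpNorm (μ : Measure (D → ℝ)) (T : (D → ℝ) → (ℝ → ℝ) → ℝ → ℝ) : ℝ :=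
  ⨆ f : {f : ℝ → ℝ // UnitL2 f}, Real.sqrt (∫ σ, l2normSq (T σ f.1) ∂μ)

/-- `b` is the finite linear combination of Haar functions with coefficients `c`. -/
def FinHaar (b : ℝ → ℝ) (c : D →₀ ℝ) : Prop :=
  b = fun x => ∑ I ∈ c.support, c I * haar I x

/-- The paraproduct `P^{ε,γ}_{b,α} f = ∑_{I} (⟨b, h^α_I⟩/|I|^{1/2}) ⟨f, h^γ_I⟩ h^ε_I` with
function symbol `b`, the sum extended over a finite set `s` containing all the
nonvanishing terms. -/
def Pb (s : Finset D) (e g a : Bool) (b : ℝ → ℝ) (f : ℝ → ℝ) : ℝ → ℝ := fun x =>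
  ∑ I ∈ s, (ip b (hfun a I) / Real.sqrt (len I)) * ip f (hfun g I) * hfun e I x

lemma measurableSet_ival (I : D) : MeasurableSet (ival I) := measurableSet_Ico

lemma volume_ival_ne_top (I : D) : volume (ival I) ≠ ⊤ := by
  simp only [ival, Real.volume_Ico]; exact ENNReal.ofReal_ne_top

lemma memℒp_haar (I : D) : MemLp (haar I) 2 volume := by
  have h1 : MemLp ((ival (rc I)).indicator (fun _ => (1 : ℝ))) 2 volume :=
    memLp_indicator_const 2 (measurableSet_ival _) 1 (Or.inr (volume_ival_ne_top _))
  have h2 : MemLp ((ival (lc I)).indicator (fun _ => (1 : ℝ))) 2 volume :=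
    memLp_indicator_const 2 (measurableSet_ival _) 1 (Or.inr (volume_ival_ne_top _))
  exact ((h1.sub h2).const_mul ((Real.sqrt (len I))⁻¹))

/-- The Haar function `h_I` as an element of `L²(ℝ)`. -/
def haarLp (I : D) : Lp ℝ 2 (volume : Measure ℝ) := (memℒp_haar I).toLp (haar I)

/-- The random Haar multiplier `T_σ f = ∑_{I ∈ 𝒟} σ_I ⟨f, h_I⟩ h_I`, as an element of
`L²(ℝ)`; the (infinite) sum converges unconditionally in `L²`. -/
def Tfull (σ : D → ℝ) (g : ℝ → ℝ) : Lp ℝ 2 (volume : Measure ℝ) :=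
  ∑' I : D, (σ I * ip g (haar I)) • haarLp I

/-- The composition `M_b T_σ M_β` applied to `f`, as a function. -/
def MbTM (σ : D → ℝ) (b β f : ℝ → ℝ) : ℝ → ℝ := fun x =>
  b x * (Tfull σ fun y => β y * f y) x

/-!
Put `g = β h¹_J` and `A_σ = ∑_{I ⊆ J} σ_I ⟨g, h_I⟩ b h_I`. Pointwise
`‖b T_σ g‖² ≥ 2 ⟨A_σ, b T_σ g⟩ - ‖A_σ‖²`, and because `𝔼 σ_I σ_K = δ_{IK}` both terms on the
right have expectation `∑_{I ⊆ J} ⟨g, h_I⟩² ‖b h_I‖²`, which is the Carleson-type sum since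
`⟨g, h_I⟩ = |J|^{-1/2} ⟨β, h_I⟩` and `‖b h_I‖² = |I|⁻¹ ∫_I b²` for `I ⊆ J`. In the cross term
`T_σ g` is an infinite series; its partial sums are bounded by `‖g‖₂`, so the expectation passes
to the limit by dominated convergence. For the second claim, test on the unit vectors `h¹_J`;
finite Haar sums are bounded, so `M_b` and `M_β` are bounded on `L²` and the supremum defining
the averaged norm is finite.
-/

open scoped InnerProductSpace Topology

lemma len_pos (I : D) : 0 < len I := zpow_pos two_pos _

lemma mem_ival_iff {I : D} {x : ℝ} : x ∈ ival I ↔ ⌊x / len I⌋ = I.2 := by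
  rw [Int.floor_eq_iff, le_div_iff₀ (len_pos I), div_lt_iff₀ (len_pos I)]
  rfl

lemma left_mem_ival (I : D) : (I.2 : ℝ) * 2 ^ I.1 ∈ ival I :=
  Set.left_mem_Ico.mpr (by nlinarith [len_pos I, show len I = 2 ^ I.1 from rfl])

lemma floor_div_two_zpow_add (x : ℝ) (n : ℤ) (j : ℕ) :
    ⌊x / 2 ^ (n + j)⌋ = ⌊x / 2 ^ n⌋ / 2 ^ j := by
  rw [zpow_add₀ two_ne_zero, ← div_div, zpow_natCast, ← Nat.cast_ofNat, ← Nat.cast_pow,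
    Int.floor_div_natCast]
  push_cast
  rfl

lemma mem_ival_iff_of_mem {I K : D} {x y : ℝ} (hx : x ∈ ival I) (hy : y ∈ ival I)
    (hIK : I.1 ≤ K.1) : x ∈ ival K ↔ y ∈ ival K := by
  obtain ⟨j, hj⟩ := Int.le.dest hIK
  rw [mem_ival_iff, len] at hx hy
  rw [mem_ival_iff, mem_ival_iff, len, ← hj, floor_div_two_zpow_add, floor_div_two_zpow_add,
    hx, hy]

lemma eq_of_mem_ival {I K : D} {x : ℝ} (hI : x ∈ ival I) (hK : x ∈ ival K) (h : I.1 = K.1) :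
    I = K := by
  rw [mem_ival_iff] at hI hK
  rw [len, h] at hI
  exact Prod.ext h (hI.symm.trans hK)

lemma mem_ival_iff_mem_lc_or_mem_rc {I : D} {x : ℝ} :
    x ∈ ival I ↔ x ∈ ival (lc I) ∨ x ∈ ival (rc I) := by
  have h := floor_div_two_zpow_add x (I.1 - 1) 1
  simp only [Nat.cast_one, sub_add_cancel, pow_one] at h
  simp only [mem_ival_iff, len, lc, rc, h]
  omega

lemma notMem_ival_rc_of_mem_lc {I : D} {x : ℝ} (hx : x ∈ ival (lc I)) : x ∉ ival (rc I) :=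
  fun hx' => by
    have := congrArg Prod.snd (eq_of_mem_ival hx hx' rfl)
    simp only [lc, rc] at this
    omega

lemma haar_eq_zero_of_notMem {I : D} {x : ℝ} (hx : x ∉ ival I) : haar I x = 0 := by
  have hl : x ∉ ival (lc I) := fun h => hx (mem_ival_iff_mem_lc_or_mem_rc.mpr (Or.inl h))
  have hr : x ∉ ival (rc I) := fun h => hx (mem_ival_iff_mem_lc_or_mem_rc.mpr (Or.inr h))
  simp [haar, hl, hr]

lemma haar_sq (I : D) (x : ℝ) : haar I x ^ 2 = (ival I).indicator (fun _ => (len I)⁻¹) x := by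
  have hs : (Real.sqrt (len I))⁻¹ ^ 2 = (len I)⁻¹ := by
    rw [inv_pow, Real.sq_sqrt (len_pos I).le]
  by_cases hl : x ∈ ival (lc I)
  · have hI : x ∈ ival I := mem_ival_iff_mem_lc_or_mem_rc.mpr (Or.inl hl)
    simp [haar, hl, notMem_ival_rc_of_mem_lc hl, hI, hs]
  by_cases hr : x ∈ ival (rc I)
  · have hI : x ∈ ival I := mem_ival_iff_mem_lc_or_mem_rc.mpr (Or.inr hr)
    simp [haar, hl, hr, hI, hs]
  · have hI : x ∉ ival I := fun h => (mem_ival_iff_mem_lc_or_mem_rc.mp h).elim hl hr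
    simp [haar, hl, hr, hI]

lemma integral_indicator_ival (I : D) (c : ℝ) :
    ∫ x, (ival I).indicator (fun _ => c) x = c * len I := by
  rw [integral_indicator_const c (measurableSet_ival I), ival, Real.volume_real_Ico_of_le]
  · simp only [smul_eq_mul, len]; ring
  · nlinarith [len_pos I, show len I = 2 ^ I.1 from rfl]

lemma integrable_indicator_ival (I : D) (c : ℝ) :
    Integrable ((ival I).indicator (fun _ => c)) :=
  (integrable_indicator_iff (measurableSet_ival I)).mpr
    (integrableOn_const (volume_ival_ne_top I))

lemma integral_haar (I : D) : ∫ x, haar I x = 0 := by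
  simp only [haar]
  rw [integral_const_mul, integral_sub (integrable_indicator_ival _ _)
    (integrable_indicator_ival _ _), integral_indicator_ival, integral_indicator_ival]
  simp [len, lc, rc]

lemma ip_haar_self (I : D) : ip (haar I) (haar I) = 1 := by
  simp only [ip, ← sq, haar_sq, integral_indicator_ival, inv_mul_cancel₀ (len_pos I).ne']

lemma haar_eq_of_mem {I K : D} (hIK : I.1 < K.1) {x y : ℝ} (hx : x ∈ ival I)
    (hy : y ∈ ival I) : haar K x = haar K y := by
  have hl := mem_ival_iff_of_mem hx hy (K := lc K) (by simp only [lc]; omega)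
  have hr := mem_ival_iff_of_mem hx hy (K := rc K) (by simp only [rc]; omega)
  simp only [haar, Set.indicator_apply, hl, hr]

lemma ip_haar_haar_of_le {I K : D} (hne : I ≠ K) (hIK : I.1 ≤ K.1) :
    ip (haar I) (haar K) = 0 := by
  rcases hIK.eq_or_lt with heq | hlt
  · have hz : ∀ x, haar I x * haar K x = 0 := fun x => by
      by_cases hx : x ∈ ival I
      · have hxK : x ∉ ival K := fun hxK => hne (eq_of_mem_ival hx hxK heq)
        rw [haar_eq_zero_of_notMem hxK, mul_zero]
      · rw [haar_eq_zero_of_notMem hx, zero_mul]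
    simp only [ip, hz, integral_zero]
  · -- `h_K` is constant on `I`, and `h_I` has mean zero
    have hconst : ∀ x, haar I x * haar K x = haar K (I.2 * 2 ^ I.1) * haar I x := fun x => by
      by_cases hx : x ∈ ival I
      · rw [haar_eq_of_mem hlt hx (left_mem_ival I), mul_comm]
      · rw [haar_eq_zero_of_notMem hx, zero_mul, mul_zero]
    simp only [ip, hconst, integral_const_mul, integral_haar, mul_zero]

lemma ip_haar_haar_of_ne {I K : D} (hne : I ≠ K) : ip (haar I) (haar K) = 0 := by
  rcases le_total I.1 K.1 with hIK | hKI
  · exact ip_haar_haar_of_le hne hIK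
  · simpa only [ip, mul_comm] using ip_haar_haar_of_le hne.symm hKI

section SignMultiplier

variable {ι E : Type*} [NormedAddCommGroup E] [InnerProductSpace ℝ E]
  {e : ι → E} {σ : ι → ℝ}

def signMult (e : ι → E) (σ : ι → ℝ) (x : E) : E := ∑' i, (σ i * ⟪e i, x⟫_ℝ) • e i

lemma norm_sum_signed_le (he : Orthonormal ℝ e) (hσ : ∀ i, |σ i| = 1) (x : E)
    (s : Finset ι) : ‖∑ i ∈ s, (σ i * ⟪e i, x⟫_ℝ) • e i‖ ≤ ‖x‖ := by
  refine le_of_sq_le_sq ?_ (norm_nonneg x)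
  calc ‖∑ i ∈ s, (σ i * ⟪e i, x⟫_ℝ) • e i‖ ^ 2 = ∑ i ∈ s, ‖⟪e i, x⟫_ℝ‖ ^ 2 := by
        rw [← real_inner_self_eq_norm_sq, he.inner_sum]
        refine Finset.sum_congr rfl fun i _ => ?_
        have hσi : σ i ^ 2 = 1 := by rw [← sq_abs, hσ i, one_pow]
        rw [conj_trivial, Real.norm_eq_abs, sq_abs]
        linear_combination ⟪e i, x⟫_ℝ ^ 2 * hσi
    _ ≤ ‖x‖ ^ 2 := he.sum_inner_products_le x

lemma continuous_sum_signed (e : ι → E) (x : E) (s : Finset ι) :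
    Continuous fun σ : ι → ℝ => ∑ i ∈ s, (σ i * ⟪e i, x⟫_ℝ) • e i :=
  continuous_finsetSum _ fun i _ => by fun_prop

variable [CompleteSpace E]

lemma hasSum_signMult (he : Orthonormal ℝ e) (hσ : ∀ i, |σ i| = 1) (x : E) :
    HasSum (fun i => (σ i * ⟪e i, x⟫_ℝ) • e i) (signMult e σ x) := by
  refine Summable.hasSum ?_
  have h := he.orthogonalFamily.summable_iff_norm_sq_summable (fun i => σ i * ⟪e i, x⟫_ℝ)
  simp only [LinearIsometry.toSpanSingleton_apply] at h
  refine h.mpr <| (he.inner_products_summable x).congr fun i => ?_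
  rw [norm_mul, Real.norm_eq_abs (σ i), hσ i, one_mul]

lemma norm_signMult_le (he : Orthonormal ℝ e) (hσ : ∀ i, |σ i| = 1) (x : E) :
    ‖signMult e σ x‖ ≤ ‖x‖ :=
  le_of_tendsto (hasSum_signMult he hσ x).norm
    (Eventually.of_forall (norm_sum_signed_le he hσ x))

end SignMultiplier

section RandomSigns

variable {E F : Type*} [NormedAddCommGroup E] [InnerProductSpace ℝ E]
  [NormedAddCommGroup F] [InnerProductSpace ℝ F] {e : D → E} {μ : Measure (D → ℝ)}

lemma IsSignMeasure.ae_abs_eq_one (hμ : IsSignMeasure μ) : ∀ᵐ σ ∂μ, ∀ I, |σ I| = 1 := by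
  refine ae_all_iff.mpr fun I => ?_
  have hs : MeasurableSet {t : ℝ | |t| = 1}ᶜ :=
    (measurableSet_eq_fun (by fun_prop) (by fun_prop)).compl
  have hnull : μ.map (fun σ => σ I) {t : ℝ | |t| = 1}ᶜ = 0 := by
    simp [hμ.2.2 I, Measure.dirac_apply' _ hs]
  rw [Measure.map_apply (measurable_pi_apply I) hs] at hnull
  exact measure_eq_zero_iff_ae_notMem.mp hnull |>.mono fun σ h => by simpa using h

lemma IsSignMeasure.integral_comp_eval (hμ : IsSignMeasure μ) (I : D) {f : ℝ → ℝ}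
    (hf : Measurable f) : ∫ σ, f (σ I) ∂μ = (f 1 + f (-1)) / 2 := by
  rw [← integral_map (measurable_pi_apply I).aemeasurable hf.aestronglyMeasurable, hμ.2.2 I,
    integral_smul_measure, integral_add_measure (integrable_dirac enorm_lt_top)
    (integrable_dirac enorm_lt_top), integral_dirac, integral_dirac]
  simp [ENNReal.toReal_inv]
  ring

lemma IsSignMeasure.integral_eval_mul_eval (hμ : IsSignMeasure μ) (I K : D) :
    ∫ σ, σ I * σ K ∂μ = if I = K then 1 else 0 := by
  split_ifs with h
  · subst h
    simpa using hμ.integral_comp_eval I (f := fun t => t * t) (by fun_prop)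
  · have hm : ∀ L, AEStronglyMeasurable (fun σ : D → ℝ => σ L) μ :=
      fun L => (measurable_pi_apply L).aestronglyMeasurable
    rw [(hμ.2.1.indepFun h).integral_fun_mul_eq_mul_integral (hm I) (hm K)]
    have hI : ∫ σ, σ I ∂μ = 0 := by simpa using hμ.integral_comp_eval I (f := id) measurable_id
    rw [hI, zero_mul]

lemma IsSignMeasure.integrable_eval_mul_eval (hμ : IsSignMeasure μ) (I K : D) :
    Integrable (fun σ : D → ℝ => σ I * σ K) μ := by
  have := hμ.1
  refine Integrable.of_bound (by fun_prop) 1 ?_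
  filter_upwards [hμ.ae_abs_eq_one] with σ hσ
  rw [Real.norm_eq_abs, abs_mul, hσ I, hσ K, one_mul]

lemma integral_norm_sq_sum_signed (hμ : IsSignMeasure μ) (S : Finset D) (a : D → ℝ)
    (u : D → F) : ∫ σ, ‖∑ I ∈ S, (σ I * a I) • u I‖ ^ 2 ∂μ = ∑ I ∈ S, a I ^ 2 * ‖u I‖ ^ 2 := by
  have hexp : ∀ σ : D → ℝ, ‖∑ I ∈ S, (σ I * a I) • u I‖ ^ 2 =
      ∑ I ∈ S, ∑ K ∈ S, σ I * σ K * (a I * a K * ⟪u I, u K⟫_ℝ) := fun σ => by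
    simp only [← real_inner_self_eq_norm_sq, sum_inner, inner_sum, real_inner_smul_left,
      real_inner_smul_right]
    exact Finset.sum_congr rfl fun I _ => Finset.sum_congr rfl fun K _ => by
      rw [real_inner_comm]; ring
  have hint : ∀ I K, Integrable (fun σ : D → ℝ => σ I * σ K * (a I * a K * ⟪u I, u K⟫_ℝ)) μ :=
    fun I K => (hμ.integrable_eval_mul_eval I K).mul_const _
  simp_rw [hexp]
  rw [integral_finsetSum _ fun I _ => integrable_finsetSum _ fun K _ => hint I K]
  refine Finset.sum_congr rfl fun I hI => ?_
  rw [integral_finsetSum _ fun K _ => hint I K]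
  simp_rw [integral_mul_const, hμ.integral_eval_mul_eval, ite_mul, one_mul, zero_mul]
  rw [Finset.sum_ite_eq, if_pos hI, real_inner_self_eq_norm_sq]
  ring

lemma integrable_inner_of_ae_norm_le {α : Type*} [MeasurableSpace α] {ν : Measure α}
    [IsFiniteMeasure ν] {A Y : α → F} (hA : AEStronglyMeasurable A ν)
    (hY : AEStronglyMeasurable Y ν) {a y : ℝ} (hAa : ∀ᵐ t ∂ν, ‖A t‖ ≤ a)
    (hYy : ∀ᵐ t ∂ν, ‖Y t‖ ≤ y) : Integrable (fun t => ⟪A t, Y t⟫_ℝ) ν := by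
  refine Integrable.of_bound (hA.inner hY) (a * y) ?_
  filter_upwards [hAa, hYy] with t hAt hYt
  exact (norm_inner_le_norm _ _).trans
    (mul_le_mul hAt hYt (norm_nonneg _) ((norm_nonneg _).trans hAt))

variable [CompleteSpace E] [CompleteSpace F]

lemma aestronglyMeasurable_signMult (hμ : IsSignMeasure μ) (he : Orthonormal ℝ e) (x : E) :
    AEStronglyMeasurable (fun σ => signMult e σ x) μ := by
  refine aestronglyMeasurable_of_tendsto_ae atTop
    (fun s => (continuous_sum_signed e x s).aestronglyMeasurable) ?_
  filter_upwards [hμ.ae_abs_eq_one] with σ hσ using hasSum_signMult he hσ x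

lemma integrable_eval_mul_inner_signMult (hμ : IsSignMeasure μ) (he : Orthonormal ℝ e)
    (v x : E) (I : D) : Integrable (fun σ => σ I * ⟪v, signMult e σ x⟫_ℝ) μ := by
  have := hμ.1
  refine Integrable.of_bound ((measurable_pi_apply I).aestronglyMeasurable.mul
    (aestronglyMeasurable_const.inner (aestronglyMeasurable_signMult hμ he x))) (‖v‖ * ‖x‖) ?_
  filter_upwards [hμ.ae_abs_eq_one] with σ hσ
  rw [norm_mul, Real.norm_eq_abs, hσ I, one_mul]
  exact (norm_inner_le_norm _ _).trans
    (mul_le_mul_of_nonneg_left (norm_signMult_le he hσ x) (norm_nonneg v))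

lemma integral_eval_mul_inner_signMult (hμ : IsSignMeasure μ) (he : Orthonormal ℝ e)
    (v x : E) (I : D) :
    ∫ σ, σ I * ⟪v, signMult e σ x⟫_ℝ ∂μ = ⟪e I, x⟫_ℝ * ⟪v, e I⟫_ℝ := by
  have := hμ.1
  set P : Finset D → (D → ℝ) → ℝ :=
    fun s σ => σ I * ⟪v, ∑ K ∈ s, (σ K * ⟪e K, x⟫_ℝ) • e K⟫_ℝ
  have hP : ∀ s σ, P s σ = ∑ K ∈ s, σ I * σ K * (⟪e K, x⟫_ℝ * ⟪v, e K⟫_ℝ) := fun s σ => by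
    simp only [P, inner_sum, Finset.mul_sum, real_inner_smul_right]
    exact Finset.sum_congr rfl fun K _ => by ring
  have hpartial : ∀ s, I ∈ s → ∫ σ, P s σ ∂μ = ⟪e I, x⟫_ℝ * ⟪v, e I⟫_ℝ := fun s hI => by
    simp_rw [hP]
    rw [integral_finsetSum _ fun K _ => (hμ.integrable_eval_mul_eval I K).mul_const _]
    simp_rw [integral_mul_const, hμ.integral_eval_mul_eval, ite_mul, one_mul, zero_mul]
    rw [Finset.sum_ite_eq, if_pos hI]
  have hmeas : ∀ s, AEStronglyMeasurable (P s) μ := fun s =>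
    ((continuous_apply I).mul
      (continuous_const.inner (continuous_sum_signed e x s))).aestronglyMeasurable
  have hbound : ∀ s, ∀ᵐ σ ∂μ, ‖P s σ‖ ≤ ‖v‖ * ‖x‖ := fun s => by
    filter_upwards [hμ.ae_abs_eq_one] with σ hσ
    rw [norm_mul, Real.norm_eq_abs, hσ I, one_mul]
    exact (norm_inner_le_norm _ _).trans
      (mul_le_mul_of_nonneg_left (norm_sum_signed_le he hσ x s) (norm_nonneg v))
  have hlim : ∀ᵐ σ ∂μ, Tendsto (fun s => P s σ) atTop (𝓝 (σ I * ⟪v, signMult e σ x⟫_ℝ)) := by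
    filter_upwards [hμ.ae_abs_eq_one] with σ hσ
    have hcont : Continuous fun y : E => σ I * ⟪v, y⟫_ℝ := by fun_prop
    exact (hcont.tendsto _).comp (hasSum_signMult he hσ x)
  refine tendsto_nhds_unique (tendsto_integral_filter_of_norm_le_const
    (Eventually.of_forall hmeas) ⟨_, Eventually.of_forall hbound⟩ hlim)
    (tendsto_const_nhds.congr' ?_)
  filter_upwards [eventually_ge_atTop {I}] with s hs
  exact (hpartial s (Finset.singleton_subset_iff.mp hs)).symm

lemma integral_inner_sum_signed_signMult (hμ : IsSignMeasure μ) (he : Orthonormal ℝ e)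
    (L : E →L[ℝ] F) (x : E) (S : Finset D) (a : D → ℝ) :
    ∫ σ, ⟪∑ I ∈ S, (σ I * a I) • L (e I), L (signMult e σ x)⟫_ℝ ∂μ =
      ∑ I ∈ S, a I * ⟪e I, x⟫_ℝ * ‖L (e I)‖ ^ 2 := by
  have hexp : ∀ σ, ⟪∑ I ∈ S, (σ I * a I) • L (e I), L (signMult e σ x)⟫_ℝ =
      ∑ I ∈ S, a I * (σ I * ⟪L.adjoint (L (e I)), signMult e σ x⟫_ℝ) := fun σ => by
    simp only [sum_inner, real_inner_smul_left, ContinuousLinearMap.adjoint_inner_left]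
    exact Finset.sum_congr rfl fun I _ => by ring
  simp_rw [hexp]
  rw [integral_finsetSum _ fun I _ =>
    (integrable_eval_mul_inner_signMult hμ he _ x I).const_mul _]
  refine Finset.sum_congr rfl fun I _ => ?_
  rw [integral_const_mul, integral_eval_mul_inner_signMult hμ he,
    ContinuousLinearMap.adjoint_inner_left, real_inner_self_eq_norm_sq, mul_assoc]

theorem sum_inner_sq_mul_norm_sq_le_integral (hμ : IsSignMeasure μ) (he : Orthonormal ℝ e)
    (L : E →L[ℝ] F) (x : E) (S : Finset D) :
    ∑ I ∈ S, ⟪e I, x⟫_ℝ ^ 2 * ‖L (e I)‖ ^ 2 ≤ ∫ σ, ‖L (signMult e σ x)‖ ^ 2 ∂μ := by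
  have := hμ.1
  set Y : (D → ℝ) → F := fun σ => L (signMult e σ x)
  set A : (D → ℝ) → F := fun σ => ∑ I ∈ S, (σ I * ⟪e I, x⟫_ℝ) • L (e I)
  have hY_meas : AEStronglyMeasurable Y μ :=
    L.continuous.comp_aestronglyMeasurable (aestronglyMeasurable_signMult hμ he x)
  have hY_bound : ∀ᵐ σ ∂μ, ‖Y σ‖ ≤ ‖L‖ * ‖x‖ := by
    filter_upwards [hμ.ae_abs_eq_one] with σ hσ
    exact L.le_opNorm_of_le (norm_signMult_le he hσ x)
  have hA_meas : AEStronglyMeasurable A μ :=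
    (continuous_finsetSum _ fun I _ => by fun_prop).aestronglyMeasurable
  have hA_bound : ∀ᵐ σ ∂μ, ‖A σ‖ ≤ ∑ I ∈ S, |⟪e I, x⟫_ℝ| * ‖L (e I)‖ := by
    filter_upwards [hμ.ae_abs_eq_one] with σ hσ
    refine (norm_sum_le _ _).trans (Finset.sum_le_sum fun I _ => ?_)
    rw [norm_smul, norm_mul, Real.norm_eq_abs, Real.norm_eq_abs, hσ I, one_mul]
  have hint_A : Integrable (fun σ => ‖A σ‖ ^ 2) μ :=
    (MemLp.of_bound (p := 2) hA_meas _ hA_bound).integrable_norm_pow two_ne_zero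
  have hint_Y : Integrable (fun σ => ‖Y σ‖ ^ 2) μ :=
    (MemLp.of_bound (p := 2) hY_meas _ hY_bound).integrable_norm_pow two_ne_zero
  have hint_AY : Integrable (fun σ => ⟪A σ, Y σ⟫_ℝ) μ :=
    integrable_inner_of_ae_norm_le hA_meas hY_meas hA_bound hY_bound
  have hpt : ∀ σ, 2 * ⟪A σ, Y σ⟫_ℝ - ‖A σ‖ ^ 2 ≤ ‖Y σ‖ ^ 2 := fun σ => by
    nlinarith [norm_sub_sq_real (Y σ) (A σ), sq_nonneg ‖Y σ - A σ‖, real_inner_comm (A σ) (Y σ)]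
  calc ∑ I ∈ S, ⟪e I, x⟫_ℝ ^ 2 * ‖L (e I)‖ ^ 2
      = ∫ σ, (2 * ⟪A σ, Y σ⟫_ℝ - ‖A σ‖ ^ 2) ∂μ := by
        rw [integral_sub (hint_AY.const_mul 2) hint_A, integral_const_mul,
          integral_norm_sq_sum_signed hμ, integral_inner_sum_signed_signMult hμ he]
        simp_rw [← sq]
        ring
    _ ≤ ∫ σ, ‖Y σ‖ ^ 2 ∂μ := integral_mono ((hint_AY.const_mul 2).sub hint_A) hint_Y hpt

end RandomSigns

lemma ip_eq_inner {f g : ℝ → ℝ} {F G : Lp ℝ 2 (volume : Measure ℝ)} (hF : F =ᵐ[volume] f)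
    (hG : G =ᵐ[volume] g) : ip f g = ⟪F, G⟫_ℝ := by
  rw [L2.inner_def, ip]
  refine integral_congr_ae ?_
  filter_upwards [hF, hG] with x hFx hGx
  simp [hFx, hGx, mul_comm]

lemma l2normSq_eq_norm_sq {f : ℝ → ℝ} {F : Lp ℝ 2 (volume : Measure ℝ)}
    (hF : F =ᵐ[volume] f) : l2normSq f = ‖F‖ ^ 2 := by
  rw [← real_inner_self_eq_norm_sq, ← ip_eq_inner hF hF, ip, l2normSq]
  simp only [sq]

lemma coeFn_haarLp (I : D) : haarLp I =ᵐ[volume] haar I := (memℒp_haar I).coeFn_toLp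

lemma orthonormal_haarLp : Orthonormal ℝ haarLp := by
  rw [orthonormal_iff_ite]
  intro I K
  rw [← ip_eq_inner (coeFn_haarLp I) (coeFn_haarLp K)]
  split_ifs with h
  · rw [h, ip_haar_self]
  · exact ip_haar_haar_of_ne h

lemma Tfull_eq_signMult {g : ℝ → ℝ} {G : Lp ℝ 2 (volume : Measure ℝ)} (hG : G =ᵐ[volume] g)
    (σ : D → ℝ) : Tfull σ g = signMult haarLp σ G := by
  refine tsum_congr fun I => ?_
  rw [ip_eq_inner hG (coeFn_haarLp I), real_inner_comm]

def mulL2 (b : Lp ℝ ∞ (volume : Measure ℝ)) :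
    Lp ℝ 2 (volume : Measure ℝ) →L[ℝ] Lp ℝ 2 (volume : Measure ℝ) :=
  (ContinuousLinearMap.mul ℝ ℝ).holderL volume ∞ 2 2 b

lemma coeFn_mulL2 (b : Lp ℝ ∞ (volume : Measure ℝ)) (G : Lp ℝ 2 (volume : Measure ℝ)) :
    mulL2 b G =ᵐ[volume] fun x => b x * G x :=
  (ContinuousLinearMap.mul ℝ ℝ).coeFn_holder (r := 2) b G

lemma l2normSq_MbTM {b β f : ℝ → ℝ} (hb : MemLp b ∞ volume) (hβ : MemLp β ∞ volume)
    {F : Lp ℝ 2 (volume : Measure ℝ)} (hF : F =ᵐ[volume] f) (σ : D → ℝ) :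
    l2normSq (MbTM σ b β f) =
      ‖mulL2 (hb.toLp b) (signMult haarLp σ (mulL2 (hβ.toLp β) F))‖ ^ 2 := by
  have hG : mulL2 (hβ.toLp β) F =ᵐ[volume] fun y => β y * f y := by
    filter_upwards [coeFn_mulL2 (hβ.toLp β) F, hβ.coeFn_toLp, hF] with y h1 h2 h3
    rw [h1, h2, h3]
  refine l2normSq_eq_norm_sq ?_
  filter_upwards [coeFn_mulL2 (hb.toLp b) _, hb.coeFn_toLp] with x h1 h2
  rw [h1, h2, MbTM, Tfull_eq_signMult hG]

lemma memLp_top_haar (I : D) : MemLp (haar I) ∞ volume := by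
  have hind : ∀ K : D, MemLp ((ival K).indicator (fun _ => (1 : ℝ))) ∞ volume := fun K =>
    memLp_indicator_const ∞ (measurableSet_ival K) 1 (Or.inr (volume_ival_ne_top K))
  exact ((hind (rc I)).sub (hind (lc I))).const_mul _

lemma FinHaar.memLp_top {b : ℝ → ℝ} {c : D →₀ ℝ} (hb : FinHaar b c) : MemLp b ∞ volume := by
  rw [hb]
  exact memLp_finsetSum _ fun I _ => (memLp_top_haar I).const_mul _

lemma haar1_sq (I : D) (x : ℝ) :
    haar1 I x ^ 2 = (ival I).indicator (fun _ => (len I)⁻¹) x := by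
  by_cases hx : x ∈ ival I
  · simp [haar1, hx, inv_pow, Real.sq_sqrt (len_pos I).le]
  · simp [haar1, hx]

lemma memLp_two_haar1 (I : D) : MemLp (haar1 I) 2 volume :=
  (memLp_indicator_const 2 (measurableSet_ival I) 1 (Or.inr (volume_ival_ne_top I))).const_mul _

lemma unitL2_haar1 (I : D) : UnitL2 (haar1 I) := by
  refine ⟨memLp_two_haar1 I, ?_⟩
  have h := l2normSq_eq_norm_sq (memLp_two_haar1 I).coeFn_toLp
  rw [l2normSq] at h
  simp only [haar1_sq, integral_indicator_ival, inv_mul_cancel₀ (len_pos I).ne'] at h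
  rw [Lp.norm_toLp, eq_comm, pow_eq_one_iff_of_nonneg ENNReal.toReal_nonneg two_ne_zero,
    ENNReal.toReal_eq_one_iff] at h
  exact h

lemma ip_mul_haar1_haar (β : ℝ → ℝ) {I J : D} (hIJ : ival I ⊆ ival J) :
    ip (fun y => β y * haar1 J y) (haar I) = (Real.sqrt (len J))⁻¹ * ip β (haar I) := by
  rw [ip, ip, ← integral_const_mul]
  congr 1
  funext x
  by_cases hx : x ∈ ival I
  · simp only [haar1, Set.indicator_of_mem (hIJ hx)]; ring
  · simp only [haar_eq_zero_of_notMem hx, mul_zero]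

lemma l2normSq_mul_haar (b : ℝ → ℝ) (I : D) :
    l2normSq (fun x => b x * haar I x) = (len I)⁻¹ * ∫ x in ival I, b x ^ 2 := by
  rw [l2normSq, ← integral_const_mul, ← integral_indicator (measurableSet_ival I)]
  congr 1
  funext x
  rw [mul_pow, haar_sq]
  by_cases hx : x ∈ ival I
  · simp [hx, mul_comm]
  · simp [hx]

theorem carleson_le_integral_l2normSq_MbTM {b β : ℝ → ℝ} (hb : MemLp b ∞ volume)
    (hβ : MemLp β ∞ volume) {μ : Measure (D → ℝ)} (hμ : IsSignMeasure μ) (s : Finset D)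
    (J : D) :
    (len J)⁻¹ * ∑ I ∈ s.filter (fun I => ival I ⊆ ival J),
        (ip β (haar I)) ^ 2 / len I * ∫ x in ival I, (b x) ^ 2 ≤
      ∫ σ, l2normSq (MbTM σ b β (haar1 J)) ∂μ := by
  set g := mulL2 (hβ.toLp β) ((memLp_two_haar1 J).toLp (haar1 J))
  have hg : g =ᵐ[volume] fun y => β y * haar1 J y := by
    filter_upwards [coeFn_mulL2 (hβ.toLp β) _, hβ.coeFn_toLp, (memLp_two_haar1 J).coeFn_toLp]
      with y h1 h2 h3
    rw [h1, h2, h3]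
  simp_rw [l2normSq_MbTM hb hβ (memLp_two_haar1 J).coeFn_toLp]
  refine le_of_eq_of_le ?_ (sum_inner_sq_mul_norm_sq_le_integral hμ orthonormal_haarLp
    (mulL2 (hb.toLp b)) g (s.filter fun I => ival I ⊆ ival J))
  rw [Finset.mul_sum]
  refine Finset.sum_congr rfl fun I hI => ?_
  have hMb : mulL2 (hb.toLp b) (haarLp I) =ᵐ[volume] fun y => b y * haar I y := by
    filter_upwards [coeFn_mulL2 (hb.toLp b) _, hb.coeFn_toLp, coeFn_haarLp I] with y h1 h2 h3
    rw [h1, h2, h3]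
  rw [← l2normSq_eq_norm_sq hMb, l2normSq_mul_haar, real_inner_comm,
    ← ip_eq_inner hg (coeFn_haarLp I), ip_mul_haar1_haar β (Finset.mem_filter.mp hI).2,
    mul_pow, inv_pow, Real.sq_sqrt (len_pos J).le]
  ring

lemma integral_l2normSq_MbTM_le {b β f : ℝ → ℝ} (hb : MemLp b ∞ volume)
    (hβ : MemLp β ∞ volume) {μ : Measure (D → ℝ)} (hμ : IsSignMeasure μ) (hf : UnitL2 f) :
    ∫ σ, l2normSq (MbTM σ b β f) ∂μ ≤ (‖mulL2 (hb.toLp b)‖ * ‖mulL2 (hβ.toLp β)‖) ^ 2 := by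
  have := hμ.1
  have hF : ‖hf.1.toLp f‖ = 1 := by rw [Lp.norm_toLp, hf.2, ENNReal.toReal_one]
  simp_rw [l2normSq_MbTM hb hβ hf.1.coeFn_toLp]
  set C := (‖mulL2 (hb.toLp b)‖ * ‖mulL2 (hβ.toLp β)‖) ^ 2
  refine (integral_mono_of_nonneg (Eventually.of_forall fun σ => by positivity)
    (integrable_const C) ?_).trans_eq (by simp)
  filter_upwards [hμ.ae_abs_eq_one] with σ hσ
  refine pow_le_pow_left₀ (norm_nonneg _) ((ContinuousLinearMap.le_opNorm _ _).trans ?_) 2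
  refine mul_le_mul_of_nonneg_left ((norm_signMult_le orthonormal_haarLp hσ _).trans ?_)
    (norm_nonneg _)
  exact (ContinuousLinearMap.le_opNorm _ _).trans_eq (by rw [hF, mul_one])

lemma integral_l2normSq_le_avgOpNorm_sq {μ : Measure (D → ℝ)}
    {T : (D → ℝ) → (ℝ → ℝ) → ℝ → ℝ} {C : ℝ}
    (hC : ∀ f, UnitL2 f → ∫ σ, l2normSq (T σ f) ∂μ ≤ C) {f : ℝ → ℝ} (hf : UnitL2 f) :
    ∫ σ, l2normSq (T σ f) ∂μ ≤ avgOpNorm μ T ^ 2 := by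
  have h0 : 0 ≤ ∫ σ, l2normSq (T σ f) ∂μ :=
    integral_nonneg fun σ => integral_nonneg fun x => sq_nonneg _
  have hbdd : BddAbove (Set.range fun f : {f // UnitL2 f} =>
      Real.sqrt (∫ σ, l2normSq (T σ f.1) ∂μ)) :=
    ⟨Real.sqrt C, Set.forall_mem_range.mpr fun f => Real.sqrt_le_sqrt (hC f.1 f.2)⟩
  rw [← Real.sq_sqrt h0]
  exact pow_le_pow_left₀ (Real.sqrt_nonneg _) (le_ciSup hbdd ⟨f, hf⟩) 2

/-- Testing `M_b T_σ M_β` on the functions `h¹_J` bounds the Carleson-type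
expression `sup_J |J|⁻¹ ∑_{I ⊆ J} (⟨β,h_I⟩²/|I|) ∫_I b²` by the averaged operator norm. -/
theorem statement19 (b β : ℝ → ℝ) (cb cβ : D →₀ ℝ) (hb : FinHaar b cb) (hβ : FinHaar β cβ)
    (μ : Measure (D → ℝ)) (hμ : IsSignMeasure μ) :
    (∀ J : D,
      (len J)⁻¹ * ∑ I ∈ cβ.support.filter (fun I => ival I ⊆ ival J),
          (ip β (haar I)) ^ 2 / len I * ∫ x in ival I, (b x) ^ 2 ≤
        ∫ σ, l2normSq (MbTM σ b β (haar1 J)) ∂μ) ∧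
    (⨆ J : D, (len J)⁻¹ * ∑ I ∈ cβ.support.filter (fun I => ival I ⊆ ival J),
        (ip β (haar I)) ^ 2 / len I * ∫ x in ival I, (b x) ^ 2) ≤
      (avgOpNorm μ (fun σ f => MbTM σ b β f)) ^ 2 := by
  have hb' := hb.memLp_top
  have hβ' := hβ.memLp_top
  refine ⟨carleson_le_integral_l2normSq_MbTM hb' hβ' hμ _, ciSup_le fun J => ?_⟩
  exact (carleson_le_integral_l2normSq_MbTM hb' hβ' hμ _ J).trans
    (integral_l2normSq_le_avgOpNorm_sq (fun f hf => integral_l2normSq_MbTM_le hb' hβ' hμ hf)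
      (unitL2_haar1 J))

end RandomParaproducts
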